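/- Let D be a triangulated category with shift functor Σ and let (X,Y) be a cotorsion pair in D. Then the following conditions are equivalent: (1) Hom(X, Σ^k Y) = 0 for all X ∈ X, Y ∈ Y and all k ≥ 2; (2) Hom(X, Σ²Y) = 0 for all X ∈ X, Y ∈ Y; (3) Σ⁻¹X ⊆ X; (4) ΣY ⊆ Y. -/

import Mathlib

open CategoryTheory Limits Pretriangulated

universe v u

variable {C : Type u} [Category.{v} C] [Preadditive C] [HasZeroObject C]
  [HasShift C ℤ] [∀ n : ℤ, (CategoryTheory.shiftFunctor C n).Additive] [Pretriangulated C]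

/-- `A` and `B` form a biproduct decomposition of `E`. -/
def IsBiprodDecomp (A B E : C) : Prop :=
  ∃ (i : A ⟶ E) (j : B ⟶ E) (p : E ⟶ A) (q : E ⟶ B),
    i ≫ p = 𝟙 A ∧ j ≫ q = 𝟙 B ∧ i ≫ q = 0 ∧ j ≫ p = 0 ∧ p ≫ i + q ≫ j = 𝟙 E

/-- `A` is a direct summand of `E`. -/
def IsDirectSummand (A E : C) : Prop := ∃ B, IsBiprodDecomp A B E

/-- A class of objects is closed under direct summands. -/
def SummandClosed (X : Set C) : Prop := ∀ ⦃A E : C⦄, E ∈ X → IsDirectSummand A E → A ∈ X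

/-- The essential image of a class of objects under the shift by `n`. -/
def shiftSet (n : ℤ) (X : Set C) : Set C := {A | ∃ B ∈ X, Nonempty (A ≅ B⟦n⟧)}

/-- The class `X ∗ Y` of objects `E` admitting a distinguished triangle
`A ⟶ E ⟶ B ⟶ ΣA` with `A ∈ X` and `B ∈ Y`. -/
def starSet (X Y : Set C) : Set C :=
  {E | ∃ (A B : C) (_ : A ∈ X) (_ : B ∈ Y) (f : A ⟶ E) (g : E ⟶ B) (h : B ⟶ A⟦(1 : ℤ)⟧),
    Triangle.mk f g h ∈ distTriang C}

/-- A co-t-structure on a triangulated category. -/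
structure IsCoTStructure (U V : Set C) : Prop where
  summand_U : SummandClosed U
  summand_V : SummandClosed V
  hom_zero : ∀ ⦃A B : C⦄, A ∈ U → B ∈ V → ∀ f : A ⟶ B⟦(1 : ℤ)⟧, f = 0
  cover : ∀ E : C, E ∈ starSet (shiftSet (-1) U) V
  shift_le : shiftSet (-1) U ⊆ U

/-- A cotorsion pair in a triangulated category. -/
structure IsCotorsionPair (X Y : Set C) : Prop where
  summand_X : SummandClosed X
  summand_Y : SummandClosed Y
  hom_zero : ∀ ⦃A B : C⦄, A ∈ X → B ∈ Y → ∀ f : A ⟶ B⟦(1 : ℤ)⟧, f = 0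
  cover₁ : ∀ E : C, E ∈ starSet X (shiftSet 1 Y)
  cover₂ : ∀ E : C, E ∈ starSet (shiftSet (-1) X) Y

/-- `A` is a direct summand of `E` inside the full additive subcategory `H`. -/
def IsDirectSummandIn (H : Set C) (A E : C) : Prop :=
  A ∈ H ∧ ∃ B ∈ H, IsBiprodDecomp A B E

/-- A cotorsion pair in an extension-closed subcategory `H` of a triangulated category. -/
structure IsCotorsionPairIn (H A B : Set C) : Prop where
  subset_A : A ⊆ H
  subset_B : B ⊆ H
  summand_A : ∀ ⦃X E : C⦄, E ∈ A → IsDirectSummandIn H X E → X ∈ A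
  summand_B : ∀ ⦃X E : C⦄, E ∈ B → IsDirectSummandIn H X E → X ∈ B
  hom_zero : ∀ ⦃X Y : C⦄, X ∈ A → Y ∈ B → ∀ f : X ⟶ Y⟦(1 : ℤ)⟧, f = 0
  tri₁ : ∀ ⦃M : C⦄, M ∈ H → ∃ (X Y : C) (_ : X ∈ A) (_ : Y ∈ B)
    (f : Y ⟶ X) (g : X ⟶ M) (h : M ⟶ Y⟦(1 : ℤ)⟧), Triangle.mk f g h ∈ distTriang C
  tri₂ : ∀ ⦃M : C⦄, M ∈ H → ∃ (X Y : C) (_ : X ∈ A) (_ : Y ∈ B)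
    (f : M ⟶ Y) (g : Y ⟶ X) (h : X ⟶ M⟦(1 : ℤ)⟧), Triangle.mk f g h ∈ distTriang C

/-- The closure of a class of objects under finite direct sums and direct summands. -/
inductive addClosure (X : Set C) : C → Prop
  | of {A : C} : A ∈ X → addClosure X A
  | sum {A B E : C} : addClosure X A → addClosure X B → IsBiprodDecomp A B E → addClosure X E
  | summand {A E : C} : addClosure X E → IsDirectSummand A E → addClosure X A

/-- `hatN M n` is `M ∗ ΣM ∗ ⋯ ∗ ΣⁿM`. -/
def hatN (M : Set C) : ℕ → Set C
  | 0 => M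
  | n + 1 => starSet (hatN M n) (shiftSet ((n : ℤ) + 1) M)

/-- `M^∧ = ⋃_{n ≥ 0} M ∗ ΣM ∗ ⋯ ∗ ΣⁿM`. -/
def hatSet (M : Set C) : Set C := ⋃ n : ℕ, hatN M n

/-- `veeN M n` is `Σ⁻ⁿM ∗ ⋯ ∗ Σ⁻¹M ∗ M`. -/
def veeN (M : Set C) : ℕ → Set C
  | 0 => M
  | n + 1 => starSet (shiftSet (-((n : ℤ) + 1)) M) (veeN M n)

/-- `M^∨ = ⋃_{n ≥ 0} Σ⁻ⁿM ∗ ⋯ ∗ Σ⁻¹M ∗ M`. -/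
def veeSet (M : Set C) : Set C := ⋃ n : ℕ, veeN M n

/-- `bandN M m n` is `Σ⁻ᵐM ∗ ⋯ ∗ M ∗ ΣM ∗ ⋯ ∗ ΣⁿM`. -/
def bandN (M : Set C) : ℕ → ℕ → Set C
  | 0, n => hatN M n
  | m + 1, n => starSet (shiftSet (-((m : ℤ) + 1)) M) (bandN M m n)

/-- A class of objects is closed under extensions. -/
def ExtClosed (S : Set C) : Prop := ∀ ⦃T : Triangle C⦄, T ∈ (distTriang C) →
  T.obj₁ ∈ S → T.obj₃ ∈ S → T.obj₂ ∈ S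

/-- A class of objects is closed under cones. -/
def ConesClosed (S : Set C) : Prop := ∀ ⦃T : Triangle C⦄, T ∈ (distTriang C) →
  T.obj₁ ∈ S → T.obj₂ ∈ S → T.obj₃ ∈ S

/-- A class of objects is closed under cocones. -/
def CoconesClosed (S : Set C) : Prop := ∀ ⦃T : Triangle C⦄, T ∈ (distTriang C) →
  T.obj₂ ∈ S → T.obj₃ ∈ S → T.obj₁ ∈ S

/-- The thick closure of a class of objects: the smallest class containing it which is
closed under extensions, cones, cocones and direct summands. -/
inductive thickClosure (X : Set C) : C → Prop
  | of {A : C} : A ∈ X → thickClosure X A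
  | ext {T : Triangle C} : T ∈ (distTriang C) → thickClosure X T.obj₁ → thickClosure X T.obj₃ →
      thickClosure X T.obj₂
  | cone {T : Triangle C} : T ∈ (distTriang C) → thickClosure X T.obj₁ → thickClosure X T.obj₂ →
      thickClosure X T.obj₃
  | cocone {T : Triangle C} : T ∈ (distTriang C) → thickClosure X T.obj₂ → thickClosure X T.obj₃ →
      thickClosure X T.obj₁
  | summand {A E : C} : thickClosure X E → IsDirectSummand A E → thickClosure X A

/-- A presilting subcategory. -/
def IsPresilting (M : Set C) : Prop :=
  SummandClosed M ∧
    ∀ ⦃A B : C⦄, A ∈ M → B ∈ M → ∀ k : ℤ, 1 ≤ k → ∀ f : A ⟶ B⟦k⟧, f = 0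

/-- A silting subcategory. -/
def IsSilting (M : Set C) : Prop := IsPresilting M ∧ ∀ A : C, thickClosure M A

/-- A co-t-structure `(U, V)` is bounded if `⋃ₙ ΣⁿU = D = ⋃ₙ ΣⁿV`. -/
def BoundedPair (U V : Set C) : Prop :=
  (⋃ n : ℤ, shiftSet n U) = (Set.univ : Set C) ∧ (⋃ n : ℤ, shiftSet n V) = (Set.univ : Set C)

/-!
For a cotorsion pair `(X, Y)` a triangle `X₀ → A → ΣY₀ → ΣX₀` splits as soon as
`Hom(A, ΣY) = 0`, so `X` is exactly the class of objects `A` with `Hom(A, ΣY) = 0`;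
dually `Y` is the class of objects `B` with `Hom(X, ΣB) = 0`. Hence `Σ⁻¹X ⊆ X` iff
`Hom(Σ⁻¹X, ΣY) = Hom(X, Σ²Y)` vanishes, and likewise `ΣY ⊆ Y` iff `Hom(X, Σ(ΣY)) = 0`.
Once `Σ⁻¹X ⊆ X`, vanishing of `Hom(X, ΣᵏY)` propagates from `k` to `k + 1`.
-/

omit [HasZeroObject C] [HasShift C ℤ] [∀ n : ℤ, (shiftFunctor C n).Additive]
  [Pretriangulated C] in
lemma IsBiprodDecomp.swap {A B E : C} (h : IsBiprodDecomp A B E) : IsBiprodDecomp B A E := by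
  obtain ⟨i, j, p, q, hip, hjq, hiq, hjp, htotal⟩ := h
  exact ⟨j, i, q, p, hjq, hip, hjp, hiq, by rw [add_comm, htotal]⟩

omit [HasZeroObject C] [HasShift C ℤ] [∀ n : ℤ, (shiftFunctor C n).Additive]
  [Pretriangulated C] in
lemma IsBiprodDecomp.of_iso {A B E E' : C} (h : IsBiprodDecomp A B E) (e : E ≅ E') :
    IsBiprodDecomp A B E' := by
  obtain ⟨i, j, p, q, hip, hjq, hiq, hjp, htotal⟩ := h
  refine ⟨i ≫ e.hom, j ≫ e.hom, e.inv ≫ p, e.inv ≫ q, by simp [hip], by simp [hjq],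
    by simp [hiq], by simp [hjp], ?_⟩
  calc _ = e.inv ≫ (p ≫ i + q ≫ j) ≫ e.hom := by
        simp only [Preadditive.add_comp, Preadditive.comp_add, Category.assoc]
    _ = 𝟙 E' := by simp [htotal]

lemma isBiprodDecomp_biprod (A B : C) : IsBiprodDecomp A B (A ⊞ B) :=
  ⟨biprod.inl, biprod.inr, biprod.fst, biprod.snd, by simp, by simp, by simp, by simp,
    biprod.total⟩

lemma isBiprodDecomp_of_mor₃_eq_zero {T : Triangle C} (hT : T ∈ distTriang C)
    (h : T.mor₃ = 0) : IsBiprodDecomp T.obj₁ T.obj₃ T.obj₂ := by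
  obtain ⟨e, -, -⟩ := exists_iso_binaryBiproduct_of_distTriang T hT h
  exact (isBiprodDecomp_biprod _ _).of_iso e.symm

lemma isDirectSummand_obj₂_obj₁_of_mor₂_eq_zero {T : Triangle C} (hT : T ∈ distTriang C)
    (h : T.mor₂ = 0) : IsDirectSummand T.obj₂ T.obj₁ :=
  ⟨_, (isBiprodDecomp_of_mor₃_eq_zero (inv_rot_of_distTriang T hT)
    (by dsimp [Triangle.invRotate]; rw [h]; exact zero_comp)).swap⟩

lemma isDirectSummand_obj₂_obj₃_of_mor₁_eq_zero {T : Triangle C} (hT : T ∈ distTriang C)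
    (h : T.mor₁ = 0) : IsDirectSummand T.obj₂ T.obj₃ :=
  ⟨_, isBiprodDecomp_of_mor₃_eq_zero (rot_of_distTriang T hT)
    (by dsimp [Triangle.rotate]; rw [h, Functor.map_zero, neg_zero]; rfl)⟩

def HomVanishes (S T : Set C) (k : ℤ) : Prop :=
  ∀ ⦃A B : C⦄, A ∈ S → B ∈ T → ∀ f : A ⟶ B⟦k⟧, f = 0

omit [HasZeroObject C] [∀ n : ℤ, (shiftFunctor C n).Additive] [Pretriangulated C] in
lemma HomVanishes.mono_left {S S' T : Set C} {k : ℤ} (h : HomVanishes S T k) (hS : S' ⊆ S) :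
    HomVanishes S' T k :=
  fun _ _ hA hB => h (hS hA) hB

omit [HasZeroObject C] [Pretriangulated C] in
lemma homVanishes_shiftSet_left_iff {S T : Set C} {m n k : ℤ} (hk : m + n = k) :
    HomVanishes (shiftSet m S) T k ↔ HomVanishes S T n := by
  have hk' : n + m = k := by omega
  constructor
  · intro h A B hA hB f
    simpa [Functor.map_eq_zero_iff] using
      h ⟨A, hA, ⟨Iso.refl _⟩⟩ hB (f⟦m⟧' ≫ (shiftFunctorAdd' C n m k hk').inv.app B)
  · rintro h A' B ⟨A, hA, ⟨e⟩⟩ hB f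
    obtain ⟨g, hg⟩ := (shiftFunctor C m).map_surjective
      (e.inv ≫ f ≫ (shiftFunctorAdd' C n m k hk').hom.app B)
    simpa [h hA hB g] using hg.symm

omit [HasZeroObject C] [∀ n : ℤ, (shiftFunctor C n).Additive] [Pretriangulated C] in
lemma homVanishes_shiftSet_right_iff {S T : Set C} {m n k : ℤ} (hk : m + n = k) :
    HomVanishes S (shiftSet m T) n ↔ HomVanishes S T k := by
  constructor
  · intro h A B hA hB f
    simpa using h hA ⟨B, hB, ⟨Iso.refl _⟩⟩ (f ≫ (shiftFunctorAdd' C m n k hk).hom.app B)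
  · rintro h A B' hA ⟨B, hB, ⟨e⟩⟩ f
    simpa using h hA hB (f ≫ e.hom⟦n⟧' ≫ (shiftFunctorAdd' C m n k hk).inv.app B)

namespace IsCotorsionPair

variable {X Y : Set C}

lemma subset_left_iff (h : IsCotorsionPair X Y) {S : Set C} :
    S ⊆ X ↔ HomVanishes S Y 1 := by
  refine ⟨HomVanishes.mono_left h.hom_zero, fun hS A hA => ?_⟩
  obtain ⟨X₀, Z, hX₀, ⟨B, hB, ⟨e⟩⟩, f, g, δ, hT⟩ := h.cover₁ A
  have hg : g = 0 := by simpa using hS hA hB (g ≫ e.hom)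
  exact h.summand_X hX₀ (isDirectSummand_obj₂_obj₁_of_mor₂_eq_zero hT hg)

lemma subset_right_iff (h : IsCotorsionPair X Y) {T : Set C} :
    T ⊆ Y ↔ HomVanishes X T 1 := by
  refine ⟨fun hT _ _ hA hB => h.hom_zero hA (hT hB), fun hT B hB => ?_⟩
  have hT₀ : HomVanishes (shiftSet (-1) X) T 0 :=
    (homVanishes_shiftSet_left_iff (by norm_num)).2 hT
  obtain ⟨W, Y₀, hW, hY₀, f, g, δ, hTri⟩ := h.cover₂ B
  have hf : f = 0 := by simpa using hT₀ hW hB (f ≫ (shiftFunctorZero C ℤ).inv.app B)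
  exact h.summand_Y hY₀ (isDirectSummand_obj₂_obj₃_of_mor₁_eq_zero hTri hf)

lemma shiftSet_neg_one_subset_iff (h : IsCotorsionPair X Y) :
    shiftSet (-1) X ⊆ X ↔ HomVanishes X Y 2 :=
  h.subset_left_iff.trans (homVanishes_shiftSet_left_iff (by norm_num))

lemma shiftSet_one_subset_iff (h : IsCotorsionPair X Y) :
    shiftSet 1 Y ⊆ Y ↔ HomVanishes X Y 2 :=
  h.subset_right_iff.trans (homVanishes_shiftSet_right_iff (by norm_num))

lemma homVanishes_of_shiftSet_neg_one_subset (h : IsCotorsionPair X Y)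
    (hX : shiftSet (-1) X ⊆ X) {k : ℤ} (hk : 2 ≤ k) : HomVanishes X Y k := by
  induction k, hk using Int.leInduction with
  | base => exact h.shiftSet_neg_one_subset_iff.1 hX
  | succ k _ ih => exact (homVanishes_shiftSet_left_iff (by ring)).1 (ih.mono_left hX)

end IsCotorsionPair

/-- Theorem: for a cotorsion pair `(X,Y)` in a triangulated category, the conditions
(1) `Hom(X, Σ^k Y) = 0` for all `k ≥ 2`, (2) `Hom(X, Σ²Y) = 0`, (3) `Σ⁻¹X ⊆ X`, and
(4) `ΣY ⊆ Y` are all equivalent. -/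
theorem stmt3 {X Y : Set C} (h : IsCotorsionPair X Y) :
    ((∀ ⦃A B : C⦄, A ∈ X → B ∈ Y → ∀ k : ℤ, 2 ≤ k → ∀ f : A ⟶ B⟦k⟧, f = 0) ↔
      (∀ ⦃A B : C⦄, A ∈ X → B ∈ Y → ∀ f : A ⟶ B⟦(2 : ℤ)⟧, f = 0)) ∧
    ((∀ ⦃A B : C⦄, A ∈ X → B ∈ Y → ∀ f : A ⟶ B⟦(2 : ℤ)⟧, f = 0) ↔
      shiftSet (-1) X ⊆ X) ∧
    (shiftSet (-1) X ⊆ X ↔ shiftSet 1 Y ⊆ Y) := by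
  have h23 := h.shiftSet_neg_one_subset_iff
  refine ⟨⟨fun h1 A B hA hB => h1 hA hB 2 le_rfl, fun h2 A B hA hB k hk => ?_⟩,
    h23.symm, h23.trans h.shiftSet_one_subset_iff.symm⟩
  exact h.homVanishes_of_shiftSet_neg_one_subset (h23.2 h2) hk hA hB
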